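/- arXiv:2412.12090 — 5 statements merged into one kernel-verified Lean document; each statement's English description precedes it below -/
import Mathlib

section
/- Let K = F_3(s,t) and f = x^2·y + x·y^2 + s·z^3 + t·w^3 in K[x,y,z,w]. There is no nonzero vector (x,y,z,w) in K^4 such that f and all four partial derivatives ∂f/∂x, ∂f/∂y, ∂f/∂z, ∂f/∂w vanish simultaneously at (x,y,z,w). In other words, the cubic surface {f = 0} in P^3 over K has no K-rational singular point in the sense of the Jacobian criterion. -/
open MvPolynomial

private abbrev R0 := MvPolynomial (Fin 2) (ZMod 3)
private abbrev K0 := FractionRing R0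

private lemma charR0 : CharP R0 3 :=
  charP_of_injective_ringHom (MvPolynomial.C_injective (Fin 2) (ZMod 3)) 3

private lemma cube_support (A : R0) (n : Fin 2 →₀ ℕ) (h : coeff n (A ^ 3) ≠ 0) :
    n 0 % 3 = 0 ∧ n 1 % 3 = 0 := by
  haveI := charR0
  haveI : ExpChar R0 3 := ExpChar.prime Nat.prime_three
  have hA : A ^ 3 = ∑ m ∈ A.support, monomial (3 • m) ((coeff m A) ^ 3) := by
    conv_lhs => rw [A.as_sum]
    rw [sum_pow_char]
    simp [monomial_pow]
  rw [hA, coeff_sum] at h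
  obtain ⟨m, hm, hne⟩ := Finset.exists_ne_zero_of_sum_ne_zero h
  rw [coeff_monomial] at hne
  split at hne
  · next heq =>
    subst heq
    simp [Finsupp.smul_apply]
  · exact absurd rfl hne

private lemma xmul_support (i : Fin 2) (B : R0) (n : Fin 2 →₀ ℕ)
    (h : coeff n (X i * B ^ 3) ≠ 0) :
    ∃ m : Fin 2 →₀ ℕ, m 0 % 3 = 0 ∧ m 1 % 3 = 0 ∧ n = Finsupp.single i 1 + m := by
  have hn : n ∈ (X i * B ^ 3).support := mem_support_iff.2 h
  have hsub := MvPolynomial.support_mul (X i : R0) (B ^ 3) hn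
  rw [Finset.mem_add] at hsub
  obtain ⟨a, ha, m, hm, rfl⟩ := hsub
  rw [support_X, Finset.mem_singleton] at ha
  subst ha
  obtain ⟨h0, h1⟩ := cube_support B m (mem_support_iff.1 hm)
  exact ⟨m, h0, h1, rfl⟩

private lemma poly_key (A B C : R0) (h : A ^ 3 + X 0 * B ^ 3 + X 1 * C ^ 3 = 0) :
    A = 0 ∧ B = 0 ∧ C = 0 := by
  have hcoeff : ∀ n, coeff n (A ^ 3) + coeff n (X 0 * B ^ 3) + coeff n (X 1 * C ^ 3) = 0 := by
    intro n
    have := congrArg (coeff n) h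
    simpa using this
  have hB0 : ∀ n : Fin 2 →₀ ℕ, coeff n (X (0:Fin 2) * B ^ 3) ≠ 0 → n 0 % 3 = 1 ∧ n 1 % 3 = 0 := by
    intro n hn
    obtain ⟨m, h0, h1, rfl⟩ := xmul_support 0 B n hn
    constructor <;> simp [Finsupp.single_apply] <;> omega
  have hC0 : ∀ n : Fin 2 →₀ ℕ, coeff n (X (1:Fin 2) * C ^ 3) ≠ 0 → n 1 % 3 = 1 := by
    intro n hn
    obtain ⟨m, h0, h1, rfl⟩ := xmul_support 1 C n hn
    simp [Finsupp.single_apply]; omega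
  have hA3 : A ^ 3 = 0 := by
    ext n
    rw [coeff_zero]
    by_contra hne
    obtain ⟨h0, h1⟩ := cube_support A n hne
    have hb : coeff n (X (0:Fin 2) * B ^ 3) = 0 := by
      by_contra hb; have := hB0 n hb; omega
    have hc : coeff n (X (1:Fin 2) * C ^ 3) = 0 := by
      by_contra hc; have := hC0 n hc; omega
    have := hcoeff n
    rw [hb, hc] at this
    simp at this
    exact hne this
  have hA : A = 0 := pow_eq_zero_iff (three_ne_zero) |>.1 hA3
  have hXB : X (0:Fin 2) * B ^ 3 = 0 := by
    ext n
    rw [coeff_zero]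
    by_contra hne
    obtain ⟨h0, h1⟩ := hB0 n hne
    have hc : coeff n (X (1:Fin 2) * C ^ 3) = 0 := by
      by_contra hc; have := hC0 n hc; omega
    have := hcoeff n
    rw [hA, hc] at this
    simp at this
    exact hne this
  have hB : B = 0 := by
    rcases mul_eq_zero.1 hXB with h' | h'
    · exact absurd h' (X_ne_zero 0)
    · exact pow_eq_zero_iff (three_ne_zero) |>.1 h'
  have hC : C = 0 := by
    rw [hA, hXB] at h
    simpa [X_ne_zero, pow_eq_zero_iff] using h
  exact ⟨hA, hB, hC⟩

private lemma frac_key (a b c : K0)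
    (h : a ^ 3 + algebraMap R0 K0 (X 0) * b ^ 3 + algebraMap R0 K0 (X 1) * c ^ 3 = 0) :
    a = 0 ∧ b = 0 ∧ c = 0 := by
  obtain ⟨pa, qa, hqa, ha⟩ := IsFractionRing.div_surjective (A := R0) a
  obtain ⟨pb, qb, hqb, hb⟩ := IsFractionRing.div_surjective (A := R0) b
  obtain ⟨pc, qc, hqc, hc⟩ := IsFractionRing.div_surjective (A := R0) c
  have hqa0 : (algebraMap R0 K0) qa ≠ 0 :=
    IsFractionRing.to_map_ne_zero_of_mem_nonZeroDivisors hqa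
  have hqb0 : (algebraMap R0 K0) qb ≠ 0 :=
    IsFractionRing.to_map_ne_zero_of_mem_nonZeroDivisors hqb
  have hqc0 : (algebraMap R0 K0) qc ≠ 0 :=
    IsFractionRing.to_map_ne_zero_of_mem_nonZeroDivisors hqc
  set φ := algebraMap R0 K0
  have hD : φ (qa * qb * qc) ≠ 0 := by
    rw [map_mul, map_mul]; exact mul_ne_zero (mul_ne_zero hqa0 hqb0) hqc0
  have haD : a * φ (qa * qb * qc) = φ (pa * (qb * qc)) := by
    rw [← ha]; field_simp; simp only [map_mul]; ring
  have hbD : b * φ (qa * qb * qc) = φ (pb * (qa * qc)) := by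
    rw [← hb]; field_simp; simp only [map_mul]; ring
  have hcD : c * φ (qa * qb * qc) = φ (pc * (qa * qb)) := by
    rw [← hc]; field_simp; simp only [map_mul]; ring
  have key : φ ((pa * (qb * qc)) ^ 3 + X 0 * (pb * (qa * qc)) ^ 3
      + X 1 * (pc * (qa * qb)) ^ 3) = 0 := by
    rw [map_add, map_add, map_mul, map_mul, map_pow, map_pow, map_pow,
      ← haD, ← hbD, ← hcD]
    have : (a * φ (qa * qb * qc)) ^ 3 + φ (X 0) * (b * φ (qa * qb * qc)) ^ 3
        + φ (X 1) * (c * φ (qa * qb * qc)) ^ 3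
        = (a ^ 3 + φ (X 0) * b ^ 3 + φ (X 1) * c ^ 3) * φ (qa * qb * qc) ^ 3 := by
      ring
    rw [this, h, zero_mul]
  have key' : (pa * (qb * qc)) ^ 3 + X 0 * (pb * (qa * qc)) ^ 3
      + X 1 * (pc * (qa * qb)) ^ 3 = 0 := by
    apply IsFractionRing.injective R0 K0
    rw [key, map_zero]
  obtain ⟨hA, hB, hC⟩ := poly_key _ _ _ key'
  refine ⟨?_, ?_, ?_⟩
  · have := haD; rw [hA, map_zero] at this
    exact (mul_eq_zero.1 this).resolve_right hD
  · have := hbD; rw [hB, map_zero] at this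
    exact (mul_eq_zero.1 this).resolve_right hD
  · have := hcD; rw [hC, map_zero] at this
    exact (mul_eq_zero.1 this).resolve_right hD

private noncomputable def s0 : K0 := algebraMap R0 K0 (X 0)
private noncomputable def t0 : K0 := algebraMap R0 K0 (X 1)

private noncomputable def f0 : MvPolynomial (Fin 4) K0 :=
  X 0 ^ 2 * X 1 + X 0 * X 1 ^ 2 + C s0 * X 2 ^ 3 + C t0 * X 3 ^ 3

set_option maxHeartbeats 2000000 in
set_option synthInstance.maxHeartbeats 1000000 in
private lemma main :
    ¬ ∃ v : Fin 4 → K0, v ≠ 0 ∧ eval v f0 = 0 ∧ ∀ i : Fin 4, eval v (pderiv i f0) = 0 := by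
  haveI : CharP R0 3 := charR0
  haveI : CharP K0 3 := charP_of_injective_algebraMap (IsFractionRing.injective R0 K0) 3
  have h3 : (3 : K0) = 0 := CharP.cast_eq_zero K0 3
  rintro ⟨v, hv, hf, hd⟩
  set x := v 0 with hx
  set y := v 1 with hy
  set z := v 2 with hz
  set w := v 3 with hw
  have hf' : x ^ 2 * y + x * y ^ 2 + s0 * z ^ 3 + t0 * w ^ 3 = 0 := by
    simpa [f0] using hf
  have h0 : 2 * x * y + y ^ 2 = 0 := by
    have := hd 0
    simp [f0, pderiv_mul, pderiv_pow, pderiv_X, pderiv_C] at this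
    linear_combination this
  have h1 : x ^ 2 + 2 * x * y = 0 := by
    have := hd 1
    simp [f0, pderiv_mul, pderiv_pow, pderiv_X, pderiv_C] at this
    linear_combination this
  by_cases hy0 : y = 0
  · have hx2 : x ^ 2 = 0 := by linear_combination h1 - 2 * x * hy0
    have hx0 : x = 0 := pow_eq_zero_iff (two_ne_zero) |>.1 hx2
    have heq : (0:K0) ^ 3 + algebraMap R0 K0 (X 0) * z ^ 3 + algebraMap R0 K0 (X 1) * w ^ 3 = 0 := by
      have : s0 * z ^ 3 + t0 * w ^ 3 = 0 := by
        linear_combination hf' - x*y*hx0 - x*y*hy0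
      simpa [s0, t0] using this
    obtain ⟨-, hz0, hw0⟩ := frac_key 0 z w heq
    apply hv
    funext i
    fin_cases i
    · exact hx0
    · exact hy0
    · exact hz0
    · exact hw0
  · have hmul : y * (2 * x + y) = 0 := by linear_combination h0
    have h2x : 2 * x + y = 0 := (mul_eq_zero.1 hmul).resolve_left hy0
    have hyx : y = x := by linear_combination h2x - x * h3
    have heq : (-x) ^ 3 + algebraMap R0 K0 (X 0) * z ^ 3 + algebraMap R0 K0 (X 1) * w ^ 3 = 0 := by
      have : (-x) ^ 3 + s0 * z ^ 3 + t0 * w ^ 3 = 0 := by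
        linear_combination hf' - x*(y+2*x)*hyx - x^3*h3
      simpa [s0, t0] using this
    obtain ⟨hx0, -, -⟩ := frac_key (-x) z w heq
    exact hy0 (by rw [hyx]; simpa using hx0)

/-- Over `K = 𝔽₃(s,t)`, the cubic `f = x²y + xy² + s z³ + t w³` has no nonzero `K`-point at
which `f` and all four partial derivatives vanish simultaneously. -/
theorem stmt_8 :
    let R := MvPolynomial (Fin 2) (ZMod 3)
    let K := FractionRing R
    let s : K := algebraMap R K (MvPolynomial.X 0)
    let t : K := algebraMap R K (MvPolynomial.X 1)
    let f : MvPolynomial (Fin 4) K :=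
      X 0 ^ 2 * X 1 + X 0 * X 1 ^ 2 + C s * X 2 ^ 3 + C t * X 3 ^ 3
    ¬ ∃ v : Fin 4 → K, v ≠ 0 ∧ eval v f = 0 ∧ ∀ i : Fin 4, eval v (pderiv i f) = 0 :=
  main
end

section
/- Let L be an algebraically closed field of characteristic 3 containing elements s, t with s ≠ 0 and t ≠ 0, and let f = x^2·y + x·y^2 + s·z^3 + t·w^3 in L[x,y,z,w]. Then there exists a nonzero point (x,y,z,w) in L^4 at which f and all four partial derivatives of f vanish; i.e., the cubic surface {f = 0} is singular over L. -/
open MvPolynomial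

/-- Over an algebraically closed field `L` of characteristic 3 with `s, t ≠ 0`, the cubic
`f = x²y + xy² + s z³ + t w³` has a nonzero singular point: a nonzero point where `f` and all
four partial derivatives vanish. -/
theorem stmt_9 (L : Type*) [Field L] [IsAlgClosed L] [CharP L 3]
    (s t : L) (hs : s ≠ 0) (ht : t ≠ 0) :
    let f : MvPolynomial (Fin 4) L :=
      X 0 ^ 2 * X 1 + X 0 * X 1 ^ 2 + C s * X 2 ^ 3 + C t * X 3 ^ 3
    ∃ v : Fin 4 → L, v ≠ 0 ∧ eval v f = 0 ∧ ∀ i : Fin 4, eval v (pderiv i f) = 0 := by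
  intro f
  obtain ⟨r, hr⟩ := IsAlgClosed.exists_pow_nat_eq (-s / t) (n := 3) (by norm_num)
  refine ⟨![0, 0, 1, r], ?_, ?_, ?_⟩
  · intro h
    have := congrFun h 2
    simp at this
  · have h3 : (3 : L) = 0 := by exact_mod_cast CharP.cast_eq_zero L 3
    simp [f, hr]
    field_simp
    ring
  · intro i
    have h3 : (3 : L) = 0 := by exact_mod_cast CharP.cast_eq_zero L 3
    fin_cases i <;>
      simp [f, pderiv_X, Pi.single_apply, h3]
end

section
/- Let K = F_2(s) and f = x^2 + s·y^2 + z·w in K[x,y,z,w]. Then: (a) there is no nonzero (x,y,z,w) in K^4 at which f and all partial derivatives of f vanish; but (b) over an algebraic closure L of K, the point (x,y,z,w) = (b, 1, 0, 0), where b^2 = s, is a nonzero point at which f and all partial derivatives vanish. Hence the quadric {f = 0} has no K-rational singular points but is singular over the algebraic closure. -/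
open MvPolynomial

lemma X_not_sq (q : RatFunc (ZMod 2)) : q ^ 2 ≠ RatFunc.X := by
  intro h
  have hq : q ≠ 0 := by rintro rfl; simp at h; exact RatFunc.X_ne_zero h.symm
  have := congrArg RatFunc.intDegree h
  rw [RatFunc.intDegree_X, pow_two, RatFunc.intDegree_mul hq hq] at this
  omega

/-- Over `K = 𝔽₂(s)`, the quadric `f = x² + s y² + z w` has no nonzero `K`-point where `f` and
all partial derivatives vanish, but over an algebraic closure the point `(b,1,0,0)` with
`b² = s` is such a nonzero point. -/
theorem stmt_10 :
    let K := RatFunc (ZMod 2)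
    let s : K := RatFunc.X
    let f : MvPolynomial (Fin 4) K := X 0 ^ 2 + C s * X 1 ^ 2 + X 2 * X 3
    (¬ ∃ v : Fin 4 → K, v ≠ 0 ∧ eval v f = 0 ∧ ∀ i : Fin 4, eval v (pderiv i f) = 0) ∧
    (∃ b : AlgebraicClosure K, b ^ 2 = algebraMap K (AlgebraicClosure K) s ∧
      let fL := MvPolynomial.map (algebraMap K (AlgebraicClosure K)) f
      let v : Fin 4 → AlgebraicClosure K := ![b, 1, 0, 0]
      v ≠ 0 ∧ eval v fL = 0 ∧ ∀ i : Fin 4, eval v (pderiv i fL) = 0) := by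
  intro K s f
  haveI hK2 : CharP K 2 := charP_of_injective_algebraMap (algebraMap (ZMod 2) K).injective 2
  haveI : CharP (AlgebraicClosure K) 2 :=
    charP_of_injective_algebraMap (algebraMap K (AlgebraicClosure K)).injective 2
  constructor
  · rintro ⟨v, hv, hf, hd⟩
    have h2 := hd 2
    have h3 := hd 3
    simp [f, pderiv_X, Pi.single_apply] at h2 h3 hf
    rw [h2, h3, mul_zero, add_zero] at hf
    have hv1 : v 1 = 0 := by
      by_contra h1
      apply X_not_sq (v 0 / v 1)
      have hf' : s * v 1 ^ 2 = v 0 ^ 2 := by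
        rw [← CharTwo.neg_eq (v 0 ^ 2)]
        linear_combination hf
      field_simp
      linear_combination -hf'
    have hv0 : v 0 = 0 := by
      rw [hv1] at hf
      simpa using hf
    apply hv
    funext i
    fin_cases i <;> simp [hv0, hv1, h2, h3]
  · obtain ⟨b, hb⟩ := IsAlgClosed.exists_pow_nat_eq (algebraMap K (AlgebraicClosure K) s)
      (n := 2) two_pos
    refine ⟨b, hb, ?_⟩
    intro fL v
    refine ⟨?_, ?_, ?_⟩
    · intro h
      have := congrFun h 1
      simp [v] at this
    · simp [fL, f, v, hb]
      ring_nf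
      simp [CharTwo.two_eq_zero]
    · intro i
      fin_cases i <;>
        simp [fL, f, v, pderiv_X, Pi.single_apply] <;>
        ring_nf <;>
        simp [hb, CharTwo.two_eq_zero]
end

section
/- Let F be a finite field and f a homogeneous polynomial of degree d in n variables over F with 1 ≤ d < n. Then f has a nontrivial zero: there exists a nonzero vector x in F^n with f(x) = 0. -/
open MvPolynomial

/-- Chevalley's theorem: a homogeneous polynomial of degree `d` in `n > d ≥ 1` variables over a
finite field has a nontrivial zero. -/
theorem stmt_13 (F : Type*) [Field F] [Fintype F] (n d : ℕ) (hd : 1 ≤ d) (hdn : d < n)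
    (f : MvPolynomial (Fin n) F) (hf : f.IsHomogeneous d) :
    ∃ x : Fin n → F, x ≠ 0 ∧ eval x f = 0 := by
  classical
  set p := ringChar F with hp
  haveI : Fact (Nat.Prime p) := ⟨CharP.char_is_prime F p⟩
  have htd : f.totalDegree < Fintype.card (Fin n) := by
    simpa using lt_of_le_of_lt hf.totalDegree_le hdn
  have hdvd := char_dvd_card_solutions p htd
  have h0 : eval (0 : Fin n → F) f = 0 := by
    have := hf.coeff_eq_zero (d := 0) (by simpa using (by omega : 0 ≠ d))
    simpa [eval_zero, constantCoeff_eq] using this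
  by_contra hcon
  push_neg at hcon
  have hcard : Fintype.card { x : Fin n → F // eval x f = 0 } = 1 := by
    have : ∀ y : { x : Fin n → F // eval x f = 0 }, y = ⟨0, h0⟩ := by
      rintro ⟨x, hx⟩
      by_cases h : x = 0
      · simp [h]
      · exact absurd hx (hcon x h)
    exact Fintype.card_eq_one_iff.mpr ⟨⟨0, h0⟩, fun y => this y⟩
  rw [hcard] at hdvd
  exact Nat.Prime.one_lt ‹Fact (Nat.Prime p)›.out |>.ne' (Nat.eq_one_of_dvd_one hdvd) |>.elim
end

section
/- Let K = F_2(s_0, s_1, s_2, s_3) and let f = s_0·z^2 + s_1·y^3 + s_2·x_0^6 + s_3·x_1^6 in K[x_0, x_1, y, z]. Then f is irreducible in K[x_0, x_1, y, z]. -/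
set_option maxRecDepth 10000
set_option maxHeartbeats 1600000
set_option synthInstance.maxHeartbeats 400000

open MvPolynomial

/-- Over `K = 𝔽₂(s₀,s₁,s₂,s₃)`, the polynomial `s₀ z² + s₁ y³ + s₂ x₀⁶ + s₃ x₁⁶` is irreducible
in `K[x₀, x₁, y, z]` (variables indexed so that `X 0 = x₀`, `X 1 = x₁`, `X 2 = y`, `X 3 = z`). -/
theorem stmt_14 :
    let R := MvPolynomial (Fin 4) (ZMod 2)
    let K := FractionRing R
    let s : Fin 4 → K := fun i => algebraMap R K (MvPolynomial.X i)
    let f : MvPolynomial (Fin 4) K :=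
      C (s 0) * X 3 ^ 2 + C (s 1) * X 2 ^ 3 + C (s 2) * X 0 ^ 6 + C (s 3) * X 1 ^ 6
    Irreducible f := by
  intro R K s f
  haveI : CharP K 2 := charP_of_injective_algebraMap (IsFractionRing.injective R K) 2
  have hs : ∀ i, s i ≠ 0 := fun i => by
    simpa [s] using fun h => MvPolynomial.X_ne_zero (R := ZMod 2) i
      ((map_eq_zero_iff _ (IsFractionRing.injective R K)).1 h)
  set A := MvPolynomial (Fin 3) K with hA
  set L := FractionRing A with hL
  haveI : CharP A 2 := inferInstance
  haveI : CharP L 2 := charP_of_injective_algebraMap (IsFractionRing.injective A L) 2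
  set e : MvPolynomial (Fin 4) K ≃ₐ[K] Polynomial A :=
    (renameEquiv K (finRotate 4)).trans (MvPolynomial.finSuccEquiv K 3) with he
  set a : A := C ((s 0)⁻¹ * s 1) * X 2 ^ 3 + C ((s 0)⁻¹ * s 2) * X 0 ^ 6
      + C ((s 0)⁻¹ * s 3) * X 1 ^ 6 with ha
  -- images of variables
  have hC : ∀ k : K, e (MvPolynomial.C k) = Polynomial.C (MvPolynomial.C k) := fun k => by
    rw [← MvPolynomial.algebraMap_eq, AlgEquiv.commutes, Polynomial.algebraMap_apply,
      MvPolynomial.algebraMap_eq]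
  have h3 : e (X 3) = Polynomial.X := by
    have h : finRotate 4 3 = 0 := by decide
    rw [he, AlgEquiv.trans_apply, renameEquiv_apply, rename_X, h]
    exact finSuccEquiv_X_zero
  have h0 : e (X 0) = Polynomial.C (X 0) := by
    have h : finRotate 4 0 = Fin.succ 0 := by decide
    rw [he, AlgEquiv.trans_apply, renameEquiv_apply, rename_X, h]
    exact finSuccEquiv_X_succ
  have h1 : e (X 1) = Polynomial.C (X 1) := by
    have h : finRotate 4 1 = Fin.succ 1 := by decide
    rw [he, AlgEquiv.trans_apply, renameEquiv_apply, rename_X, h]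
    exact finSuccEquiv_X_succ
  have h2 : e (X 2) = Polynomial.C (X 2) := by
    have h : finRotate 4 2 = Fin.succ 2 := by decide
    rw [he, AlgEquiv.trans_apply, renameEquiv_apply, rename_X, h]
    exact finSuccEquiv_X_succ
  have hef : e f = Polynomial.C (MvPolynomial.C (s 0))
      * (Polynomial.X ^ 2 + Polynomial.C a) := by
    have hcancel : ∀ i, s 0 * ((s 0)⁻¹ * s i) = s i := fun i =>
      mul_inv_cancel_left₀ (hs 0) (s i)
    have key : (C (s 0) : A) * (C ((s 0)⁻¹ * s 1) * X 2 ^ 3 + C ((s 0)⁻¹ * s 2) * X 0 ^ 6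
        + C ((s 0)⁻¹ * s 3) * X 1 ^ 6)
        = C (s 1) * X 2 ^ 3 + C (s 2) * X 0 ^ 6 + C (s 3) * X 1 ^ 6 := by
      rw [mul_add, mul_add, ← mul_assoc, ← mul_assoc, ← mul_assoc, ← MvPolynomial.C_mul,
        ← MvPolynomial.C_mul, ← MvPolynomial.C_mul, hcancel, hcancel, hcancel]
    show e (C (s 0) * X 3 ^ 2 + C (s 1) * X 2 ^ 3 + C (s 2) * X 0 ^ 6 + C (s 3) * X 1 ^ 6) = _
    rw [map_add, map_add, map_add, map_mul, map_mul, map_mul, map_mul, map_pow, map_pow,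
      map_pow, map_pow, hC, hC, hC, hC, h0, h1, h2, h3, ha, mul_add, ← Polynomial.C_mul, key,
      ← Polynomial.C_pow, ← Polynomial.C_pow, ← Polynomial.C_pow, ← Polynomial.C_mul,
      ← Polynomial.C_mul, ← Polynomial.C_mul, Polynomial.C_add, Polynomial.C_add,
      add_assoc, add_assoc, add_assoc]
  haveI : UniqueFactorizationMonoid A := inferInstance
  haveI : IsIntegrallyClosed A := inferInstance
  -- reduce irreducibility along the algebra equivalence `e`
  refine Irreducible.of_map (f := e) ?_
  rw [hef]
  have hu : IsUnit (Polynomial.C (MvPolynomial.C (s 0)) : Polynomial A) :=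
    ((IsUnit.mk0 _ (hs 0)).map (MvPolynomial.C : K →+* A)).map
      (Polynomial.C : A →+* Polynomial A)
  refine (associated_unit_mul_left _ _ hu).symm.irreducible ?_
  -- Gauss' lemma: enough over the fraction field `L`
  rw [(Polynomial.monic_X_pow_add_C a (two_ne_zero)).irreducible_iff_irreducible_map_fraction_map
    (K := L)]
  rw [Polynomial.map_add, Polynomial.map_pow, Polynomial.map_X, Polynomial.map_C]
  have hirr : Irreducible
      (Polynomial.X ^ 2 - Polynomial.C (algebraMap A L a) : Polynomial L) := by
    refine X_pow_sub_C_irreducible_of_prime Nat.prime_two ?_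
    intro b hb
    -- b would be integral over A, hence in A
    have hbint : IsIntegral A b := by
      refine ⟨Polynomial.X ^ 2 - Polynomial.C a, Polynomial.monic_X_pow_sub_C a two_ne_zero, ?_⟩
      simp [hb]
    obtain ⟨q, hq⟩ := IsIntegrallyClosed.isIntegral_iff.mp hbint
    have hq2 : q ^ 2 = a := by
      apply IsFractionRing.injective A L
      rw [map_pow, hq, hb]
    -- but `a` is not a square: apply `pderiv 2`
    have hz : pderiv (2 : Fin 3) (q ^ 2) = 0 := by
      rw [Derivation.leibniz_pow, CharTwo.two_nsmul]
    have h3s : ∀ x : A, (3 : ℕ) • x = x := fun x => by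
      have h := succ_nsmul x 2
      rw [CharTwo.two_nsmul, zero_add] at h
      exact h
    have hda : pderiv (2 : Fin 3) a = C ((s 0)⁻¹ * s 1) * X 2 ^ 2 := by
      rw [ha, map_add, map_add, pderiv_C_mul, pderiv_C_mul, pderiv_C_mul,
        Derivation.leibniz_pow, Derivation.leibniz_pow, Derivation.leibniz_pow,
        pderiv_X_self, pderiv_X_of_ne (by decide), pderiv_X_of_ne (by decide),
        smul_zero, nsmul_zero, smul_zero, nsmul_zero, mul_zero, mul_zero, add_zero, add_zero,
        smul_eq_mul, mul_one, h3s]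
    have hnz : pderiv (2 : Fin 3) a ≠ 0 := by
      rw [hda]
      refine mul_ne_zero ?_ (pow_ne_zero _ (MvPolynomial.X_ne_zero _))
      rw [Ne, MvPolynomial.C_eq_zero]
      exact mul_ne_zero (inv_ne_zero (hs 0)) (hs 1)
    exact hnz (hq2 ▸ hz)
  have heq : (Polynomial.X ^ 2 - Polynomial.C (algebraMap A L a) : Polynomial L)
      = Polynomial.X ^ 2 + Polynomial.C (algebraMap A L a) :=
    CharTwo.sub_eq_add (R := Polynomial L) _ _
  rwa [heq] at hirr
end
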